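/- arXiv:2303.01921 — 3 statements merged into one kernel-verified Lean document; each statement's English description precedes it below -/
import Mathlib

section
/- For a random walk Z_t and an independent geometric time G, the running maximum Z̄_G = max_{0≤n≤G} Z_n and the quantity Z_G − Z̄_G are independent, and Z_G − Z̄_G has the same distribution as the running minimum Z_G := min_{0≤n≤G} Z_n. Consequently E[w^{Z_G}] = E[w^{Z̄_G}]·E[w^{min_{0≤n≤G} Z_n}]. -/
/-!
Encode the walk up to time `G` by its list of increments `l`. Since `G` is independent of the
i.i.d. increments, `P(path = l) = f (1 - f)^|l| ∏ p(lᵢ)`. Cutting `l` at the first time it attains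
its maximum `x` is a bijection between the paths with `(Z̄_G, Z_G - Z̄_G) = (x, y)` and the pairs
`(b, c)` where `b` reaches a strict new record `x` at its end and `c` ends at `y` without ever rising
above its start. The weight factorises along the cut because the geometric law is memoryless,
so the joint law of `(Z̄_G, Z_G - Z̄_G)` is a product. The weight is also invariant under reversing
the path, and reversal turns `Z_G - Z̄_G` into the running minimum. The moment identity follows
from `Z_G = Z̄_G + (Z_G - Z̄_G)` and independence.
-/

open MeasureTheory ProbabilityTheory Filter Set

/-- Position at time `t` of the random walk with increments `ξ`. -/
def walkPos {Ω : Type*} (ξ : ℕ → Ω → ℤ) (t : ℕ) (ω : Ω) : ℤ :=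
  ∑ i ∈ Finset.range t, ξ i ω

/-- Running maximum of the walk up to time `T`. -/
def runMax {Ω : Type*} (ξ : ℕ → Ω → ℤ) (T : ℕ) (ω : Ω) : ℤ :=
  Finset.sup' (Finset.range (T + 1))
    (Finset.nonempty_range_iff.mpr (Nat.succ_ne_zero T)) (fun n => walkPos ξ n ω)

/-- Running minimum of the walk up to time `T`. -/
def runMin {Ω : Type*} (ξ : ℕ → Ω → ℤ) (T : ℕ) (ω : Ω) : ℤ :=
  Finset.inf' (Finset.range (T + 1))
    (Finset.nonempty_range_iff.mpr (Nat.succ_ne_zero T)) (fun n => walkPos ξ n ω)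

open scoped ENNReal

lemma ENNReal.tsum_image2_eq_mul {α β γ : Type*} {g : β → γ → α} {A : Set β} {B : Set γ}
    (hg : InjOn (Function.uncurry g) (A ×ˢ B)) (F : α → ℝ≥0∞) (F₁ : β → ℝ≥0∞) (F₂ : γ → ℝ≥0∞)
    (hF : ∀ b ∈ A, ∀ c ∈ B, F (g b c) = F₁ b * F₂ c) :
    ∑' x : image2 g A B, F x = (∑' b : A, F₁ b) * ∑' c : B, F₂ c := by
  rw [← image_uncurry_prod, tsum_image F hg,
    ← (Equiv.Set.prod A B).symm.tsum_eq, ENNReal.tsum_prod', ← ENNReal.tsum_mul_right]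
  refine tsum_congr fun b => ?_
  rw [← ENNReal.tsum_mul_left]
  exact tsum_congr fun c => hF b b.2 c c.2

section

variable {Ω : Type*} [MeasurableSpace Ω] {μ : Measure Ω}

lemma measure_eq_tsum_measure_inter_preimage_singleton {β : Type*}
    [MeasurableSpace β] [Countable β] [MeasurableSingletonClass β] (μ : Measure Ω) {Y : Ω → β}
    (hY : Measurable Y) (s : Set Ω) : μ s = ∑' y, μ (s ∩ Y ⁻¹' {y}) := by
  have h := tsum_measure_preimage_singleton (μ := μ.restrict s) countable_univ
    fun y _ => hY (measurableSet_singleton y)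
  rw [tsum_univ (f := fun y => μ.restrict s (Y ⁻¹' {y})), preimage_univ,
    Measure.restrict_apply_univ] at h
  simp_rw [← h, Measure.restrict_apply (hY (measurableSet_singleton _)), inter_comm]

theorem ProbabilityTheory.indepFun_of_measure_inter_preimage_singleton_eq_mul
    {α β : Type*} [MeasurableSpace α] [MeasurableSpace β] [Countable α] [Countable β]
    [MeasurableSingletonClass α] [MeasurableSingletonClass β] [IsProbabilityMeasure μ]
    {X : Ω → α} {Y : Ω → β} (hX : Measurable X) (hY : Measurable Y) (a : α → ℝ≥0∞)
    (b : β → ℝ≥0∞) (h : ∀ x y, μ (X ⁻¹' {x} ∩ Y ⁻¹' {y}) = a x * b y) : IndepFun X Y μ := by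
  have hXx : ∀ x, μ (X ⁻¹' {x}) = a x * ∑' y, b y := fun x => by
    rw [measure_eq_tsum_measure_inter_preimage_singleton μ hY]
    simp_rw [h, ENNReal.tsum_mul_left]
  have hYy : ∀ y, μ (Y ⁻¹' {y}) = (∑' x, a x) * b y := fun y => by
    rw [measure_eq_tsum_measure_inter_preimage_singleton μ hX]
    simp_rw [inter_comm, h, ENNReal.tsum_mul_right]
  have htotal : (∑' x, a x) * ∑' y, b y = 1 := by
    simpa [← ENNReal.tsum_mul_right, ← hXx] using
      (measure_eq_tsum_measure_inter_preimage_singleton μ hX univ).symm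
  rw [indepFun_iff_map_prod_eq_prod_map_map hX.aemeasurable hY.aemeasurable]
  refine Measure.ext_of_singleton fun ⟨x, y⟩ => ?_
  rw [Measure.map_apply (hX.prodMk hY) (measurableSet_singleton _), ← singleton_prod_singleton,
    Measure.prod_prod, mk_preimage_prod,
    Measure.map_apply hX (measurableSet_singleton _), Measure.map_apply hY
    (measurableSet_singleton _), h, hXx, hYy]
  calc a x * b y = a x * b y * ((∑' x, a x) * ∑' y, b y) := by rw [htotal, mul_one]
    _ = a x * (∑' y, b y) * ((∑' x, a x) * b y) := by ring

lemma lintegral_ofReal_zpow_add_of_indepFun {X Y : Ω → ℤ} (hX : Measurable X)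
    (hY : Measurable Y) (hXY : IndepFun X Y μ) {w : ℝ} (hw : 0 < w) :
    ∫⁻ ω, ENNReal.ofReal (w ^ (X ω + Y ω)) ∂μ
      = (∫⁻ ω, ENNReal.ofReal (w ^ X ω) ∂μ) * ∫⁻ ω, ENNReal.ofReal (w ^ Y ω) ∂μ := by
  have hφ : Measurable fun z : ℤ => ENNReal.ofReal (w ^ z) := measurable_of_countable _
  simp_rw [zpow_add₀ hw.ne', ENNReal.ofReal_mul (zpow_pos hw _).le]
  exact lintegral_mul_eq_lintegral_mul_lintegral_of_indepFun (hφ.comp hX) (hφ.comp hY)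
    (hXY.comp hφ hφ)

end

namespace List

/-- Saturates at `l.sum` for `n ≥ l.length`, so lemmas about it quantify over all `n`. -/
def prefixSum (l : List ℤ) (n : ℕ) : ℤ := (l.take n).sum

def maxPrefixSum (l : List ℤ) : ℤ :=
  (Finset.range (l.length + 1)).sup' Finset.nonempty_range_add_one l.prefixSum

def minPrefixSum (l : List ℤ) : ℤ :=
  (Finset.range (l.length + 1)).inf' Finset.nonempty_range_add_one l.prefixSum

variable {l b c : List ℤ} {n : ℕ} {x y : ℤ}

@[simp] lemma prefixSum_zero (l : List ℤ) : l.prefixSum 0 = 0 := by simp [prefixSum]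

lemma prefixSum_of_length_le (h : l.length ≤ n) : l.prefixSum n = l.sum := by
  rw [prefixSum, take_of_length_le h]

lemma prefixSum_append (b c : List ℤ) (n : ℕ) :
    (b ++ c).prefixSum n = b.prefixSum n + c.prefixSum (n - b.length) := by
  simp [prefixSum, take_append]

lemma prefixSum_append_of_le (h : n ≤ b.length) : (b ++ c).prefixSum n = b.prefixSum n := by
  simp [prefixSum_append, Nat.sub_eq_zero_of_le h]

lemma prefixSum_take {k : ℕ} (h : n ≤ k) : (l.take k).prefixSum n = l.prefixSum n := by
  rw [prefixSum, take_take, min_eq_left h, prefixSum]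

lemma prefixSum_reverse (l : List ℤ) (n : ℕ) :
    l.reverse.prefixSum n = l.sum - l.prefixSum (l.length - n) := by
  rw [prefixSum, take_reverse, sum_reverse, prefixSum, eq_sub_iff_add_eq', sum_take_add_sum_drop]

lemma prefixSum_le_maxPrefixSum (l : List ℤ) (n : ℕ) : l.prefixSum n ≤ l.maxPrefixSum := by
  rcases le_total n l.length with h | h
  · exact Finset.le_sup' _ (Finset.mem_range.2 (Nat.lt_succ_of_le h))
  · rw [prefixSum_of_length_le h, ← prefixSum_of_length_le le_rfl]
    exact Finset.le_sup' _ (Finset.mem_range.2 (Nat.lt_succ_self _))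

lemma exists_prefixSum_eq_maxPrefixSum (l : List ℤ) :
    ∃ n ≤ l.length, l.prefixSum n = l.maxPrefixSum := by
  obtain ⟨n, hn, h⟩ := Finset.exists_mem_eq_sup' Finset.nonempty_range_add_one l.prefixSum
  exact ⟨n, Nat.lt_succ_iff.1 (Finset.mem_range.1 hn), h.symm⟩

lemma maxPrefixSum_eq_iff :
    l.maxPrefixSum = x ↔ (∀ n, l.prefixSum n ≤ x) ∧ ∃ n, l.prefixSum n = x := by
  constructor
  · rintro rfl
    obtain ⟨n, -, hn⟩ := l.exists_prefixSum_eq_maxPrefixSum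
    exact ⟨l.prefixSum_le_maxPrefixSum, n, hn⟩
  · rintro ⟨hle, n, rfl⟩
    exact le_antisymm (Finset.sup'_le _ _ fun m _ => hle m) (l.prefixSum_le_maxPrefixSum n)

lemma minPrefixSum_le_prefixSum (h : n ≤ l.length) : l.minPrefixSum ≤ l.prefixSum n :=
  Finset.inf'_le _ (Finset.mem_range.2 (Nat.lt_succ_of_le h))

lemma le_minPrefixSum (h : ∀ n, x ≤ l.prefixSum n) : x ≤ l.minPrefixSum :=
  Finset.le_inf' _ _ fun n _ => h n

lemma sum_sub_maxPrefixSum (l : List ℤ) : l.sum - l.maxPrefixSum = l.reverse.minPrefixSum := by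
  refine le_antisymm (le_minPrefixSum fun n => ?_) ?_
  · rw [prefixSum_reverse]
    linarith [l.prefixSum_le_maxPrefixSum (l.length - n)]
  · obtain ⟨n, hn, hmax⟩ := l.exists_prefixSum_eq_maxPrefixSum
    have h := l.reverse.minPrefixSum_le_prefixSum (n := l.length - n) (by simp)
    rwa [prefixSum_reverse, Nat.sub_sub_self hn, hmax] at h

def strictRecordPaths (x : ℤ) : Set (List ℤ) :=
  {b | b.sum = x ∧ ∀ j < b.length, b.prefixSum j < x}

def nonposPaths (y : ℤ) : Set (List ℤ) := {c | c.sum = y ∧ ∀ j, c.prefixSum j ≤ 0}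

lemma prefixSum_le_of_mem_strictRecordPaths (hb : b ∈ strictRecordPaths x) (n : ℕ) :
    b.prefixSum n ≤ x := by
  rcases lt_or_ge n b.length with h | h
  · exact (hb.2 n h).le
  · rw [prefixSum_of_length_le h, hb.1]

lemma injOn_append_strictRecordPaths (x : ℤ) (B : Set (List ℤ)) :
    InjOn (Function.uncurry (· ++ ·)) (strictRecordPaths x ×ˢ B) := by
  have key : ∀ {b b' c c' : List ℤ}, b ∈ strictRecordPaths x → b' ∈ strictRecordPaths x →
      b ++ c = b' ++ c' → b.length ≤ b'.length := by
    intro b b' c c' hb hb' h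
    by_contra! hlt
    have h' := congrArg (prefixSum · b'.length) h
    simp only [prefixSum_append_of_le hlt.le, prefixSum_append_of_le le_rfl,
      prefixSum_of_length_le le_rfl, hb'.1] at h'
    exact (hb.2 _ hlt).ne h'
  rintro ⟨b, c⟩ ⟨hb, -⟩ ⟨b', c'⟩ ⟨hb', -⟩ (h : b ++ c = b' ++ c')
  obtain ⟨rfl, rfl⟩ := append_inj h (le_antisymm (key hb hb' h) (key hb' hb h.symm))
  rfl

/-- Splitting a path at the first time it attains its maximum. -/
lemma image2_append_strictRecordPaths_nonposPaths (x y : ℤ) :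
    image2 (· ++ ·) (strictRecordPaths x) (nonposPaths y)
      = {l | l.maxPrefixSum = x ∧ l.sum - l.maxPrefixSum = y} := by
  ext l
  constructor
  · rintro ⟨b, hb, c, hc, rfl⟩
    have hmax : (b ++ c).maxPrefixSum = x := by
      refine maxPrefixSum_eq_iff.2 ⟨fun n => ?_, b.length, ?_⟩
      · rw [prefixSum_append]
        linarith [prefixSum_le_of_mem_strictRecordPaths hb n, hc.2 (n - b.length)]
      · rw [prefixSum_append_of_le le_rfl, prefixSum_of_length_le le_rfl, hb.1]
    refine ⟨hmax, ?_⟩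
    rw [hmax, sum_append, hb.1, hc.1]
    ring
  · rintro ⟨hx, hy⟩
    classical
    have hex : ∃ k, l.prefixSum k = x := hx ▸ (maxPrefixSum_eq_iff.1 rfl).2
    set k := Nat.find hex
    have hk : l.prefixSum k = x := Nat.find_spec hex
    have hbefore : ∀ j < k, l.prefixSum j < x := fun j hj =>
      lt_of_le_of_ne (hx ▸ l.prefixSum_le_maxPrefixSum j) (Nat.find_min hex hj)
    have hkl : k ≤ l.length := by
      by_contra! h
      exact (hbefore _ h).ne (by rw [prefixSum_of_length_le le_rfl, ← hk,
        prefixSum_of_length_le h.le])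
    have hlen : (l.take k).length = k := length_take_of_le hkl
    refine ⟨l.take k, ⟨hk, fun j hj => ?_⟩, l.drop k, ⟨?_, fun j => ?_⟩, take_append_drop k l⟩
    · rw [prefixSum_take (by omega)]
      exact hbefore j (by omega)
    · have h : l.prefixSum k + (l.drop k).sum = l.sum := l.sum_take_add_sum_drop k
      linarith
    · have h := prefixSum_append (l.take k) (l.drop k) (k + j)
      rw [take_append_drop, hlen, Nat.add_sub_cancel_left,
        prefixSum_of_length_le (hlen.trans_le (Nat.le_add_right k j))] at h
      change _ = l.prefixSum k + _ at h
      linarith [hx ▸ l.prefixSum_le_maxPrefixSum (k + j)]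

end List

namespace RandomWalk

variable {Ω : Type*} {ξ : ℕ → Ω → ℤ} {G : Ω → ℕ}

def increments (ξ : ℕ → Ω → ℤ) (t : ℕ) (ω : Ω) : List ℤ := List.ofFn fun i : Fin t => ξ i ω

lemma prefixSum_increments {t n : ℕ} (h : n ≤ t) (ω : Ω) :
    (increments ξ t ω).prefixSum n = walkPos ξ n ω := by
  induction n with
  | zero => simp [List.prefixSum, walkPos]
  | succ n ih =>
    rw [List.prefixSum, List.sum_take_succ _ _ (by simp [increments]; omega), ← List.prefixSum,
      ih (by omega), walkPos, walkPos, Finset.sum_range_succ]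
    simp [increments]

lemma sum_increments (t : ℕ) (ω : Ω) : (increments ξ t ω).sum = walkPos ξ t ω := by
  rw [← List.prefixSum_of_length_le (n := t) (by simp [increments]), prefixSum_increments le_rfl]

lemma maxPrefixSum_increments (t : ℕ) (ω : Ω) :
    (increments ξ t ω).maxPrefixSum = runMax ξ t ω :=
  Finset.sup'_congr _ (by simp [increments]) fun n hn =>
    prefixSum_increments (by simp [increments] at hn; omega) ω

lemma minPrefixSum_increments (t : ℕ) (ω : Ω) :
    (increments ξ t ω).minPrefixSum = runMin ξ t ω :=
  Finset.inf'_congr _ (by simp [increments]) fun n hn =>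
    prefixSum_increments (by simp [increments] at hn; omega) ω

lemma increments_eq_iff (l : List ℤ) (ω : Ω) :
    increments ξ l.length ω = l ↔ ∀ i : Fin l.length, ξ i ω = l[i] := by
  conv_lhs => rhs; rw [← List.ofFn_getElem (xs := l)]
  rw [increments, List.ofFn_inj, funext_iff]
  rfl

lemma setOf_increments_stopped_eq (l : List ℤ) :
    {ω | increments ξ (G ω) ω = l}
      = G ⁻¹' {l.length} ∩ (fun ω i => ξ i ω) ⁻¹' {u | ∀ i : Fin l.length, u i = l[i]} := by
  ext ω
  change increments ξ (G ω) ω = l ↔ G ω = l.length ∧ ∀ i : Fin l.length, ξ i ω = l[i]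
  constructor
  · intro h
    have hG : G ω = l.length := h ▸ List.length_ofFn.symm
    exact ⟨hG, (increments_eq_iff l ω).1 (hG ▸ h)⟩
  · rintro ⟨hG, h⟩
    rw [hG]
    exact (increments_eq_iff l ω).2 h

variable [MeasurableSpace Ω] {μ : Measure Ω}

lemma measurableSet_increments_pattern (l : List ℤ) :
    MeasurableSet {u : ℕ → ℤ | ∀ i : Fin l.length, u i = l[i]} := by
  simp only [ofPred_forall]
  exact MeasurableSet.iInter fun i => measurableSet_eq_fun (measurable_pi_apply _) measurable_const

lemma measurableSet_increments_stopped_eq (hmeas : ∀ i, Measurable (ξ i)) (hG : Measurable G)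
    (l : List ℤ) : MeasurableSet {ω | increments ξ (G ω) ω = l} := by
  rw [setOf_increments_stopped_eq]
  exact hG (measurableSet_singleton _) |>.inter <|
    measurable_pi_lambda _ hmeas (measurableSet_increments_pattern l)

lemma measurable_comp_increments_stopped {β : Type*} [MeasurableSpace β]
    (hmeas : ∀ i, Measurable (ξ i)) (hG : Measurable G) (φ : List ℤ → β) :
    Measurable fun ω => φ (increments ξ (G ω) ω) := fun s _ => by
  change MeasurableSet ((fun ω => increments ξ (G ω) ω) ⁻¹' (φ ⁻¹' s))
  rw [← biUnion_preimage_singleton]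
  exact MeasurableSet.biUnion (to_countable _) fun l _ =>
    measurableSet_increments_stopped_eq hmeas hG l

lemma measurable_runMax_stopped (hmeas : ∀ i, Measurable (ξ i)) (hG : Measurable G) :
    Measurable fun ω => runMax ξ (G ω) ω := by
  simpa only [maxPrefixSum_increments] using
    measurable_comp_increments_stopped hmeas hG List.maxPrefixSum

lemma measurable_runMin_stopped (hmeas : ∀ i, Measurable (ξ i)) (hG : Measurable G) :
    Measurable fun ω => runMin ξ (G ω) ω := by
  simpa only [minPrefixSum_increments] using
    measurable_comp_increments_stopped hmeas hG List.minPrefixSum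

lemma measurable_walkPos_sub_runMax_stopped (hmeas : ∀ i, Measurable (ξ i))
    (hG : Measurable G) : Measurable fun ω => walkPos ξ (G ω) ω - runMax ξ (G ω) ω := by
  simpa only [sum_increments, maxPrefixSum_increments] using
    measurable_comp_increments_stopped hmeas hG fun l => l.sum - l.maxPrefixSum

noncomputable def incrementWeight (μ : Measure Ω) (ξ : ℕ → Ω → ℤ) (l : List ℤ) : ℝ≥0∞ :=
  (l.map fun z => μ (ξ 0 ⁻¹' {z})).prod

noncomputable def pathWeight (μ : Measure Ω) (ξ : ℕ → Ω → ℤ) (G : Ω → ℕ) (l : List ℤ) : ℝ≥0∞ :=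
  μ {ω | G ω = l.length} * incrementWeight μ ξ l

lemma measure_increments_eq (hmeas : ∀ i, Measurable (ξ i)) (hindep : iIndepFun ξ μ)
    (hident : ∀ i, Measure.map (ξ i) μ = Measure.map (ξ 0) μ) (l : List ℤ) :
    μ ((fun ω i => ξ i ω) ⁻¹' {u | ∀ i : Fin l.length, u i = l[i]}) = incrementWeight μ ξ l := by
  have hsame : ∀ i z, μ (ξ i ⁻¹' {z}) = μ (ξ 0 ⁻¹' {z}) := fun i z => by
    rw [← Measure.map_apply (hmeas i) (measurableSet_singleton z), hident,
      Measure.map_apply (hmeas 0) (measurableSet_singleton z)]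
  have hset : (fun ω i => ξ i ω) ⁻¹' {u | ∀ i : Fin l.length, u i = l[i]}
      = ⋂ i ∈ (Finset.univ : Finset (Fin l.length)), ξ i ⁻¹' {l[i]} := by
    ext ω; simp
  rw [hset, (hindep.precomp Fin.val_injective).measure_inter_preimage_eq_mul _
    fun i _ => measurableSet_singleton _, incrementWeight]
  conv_rhs => rw [← List.ofFn_getElem (xs := l), List.map_ofFn, List.prod_ofFn]
  simp [hsame]

lemma measure_increments_stopped_eq (hmeas : ∀ i, Measurable (ξ i)) (hindep : iIndepFun ξ μ)
    (hident : ∀ i, Measure.map (ξ i) μ = Measure.map (ξ 0) μ)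
    (hGindep : IndepFun G (fun ω i => ξ i ω) μ) (l : List ℤ) :
    μ {ω | increments ξ (G ω) ω = l} = pathWeight μ ξ G l := by
  rw [setOf_increments_stopped_eq, hGindep.measure_inter_preimage_eq_mul _ _
    (measurableSet_singleton _) (measurableSet_increments_pattern l),
    measure_increments_eq hmeas hindep hident]
  rfl

lemma pathWeight_reverse (l : List ℤ) : pathWeight μ ξ G l.reverse = pathWeight μ ξ G l := by
  simp [pathWeight, incrementWeight, List.map_reverse, List.prod_reverse]

/-- Memorylessness of the geometric time. -/
lemma pathWeight_append {f : ℝ}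
    (hGlaw : ∀ t : ℕ, μ {ω | G ω = t} = ENNReal.ofReal ((1 - f) ^ t * f)) (hf1 : f ≤ 1)
    (b c : List ℤ) :
    pathWeight μ ξ G (b ++ c)
      = ENNReal.ofReal ((1 - f) ^ b.length) * incrementWeight μ ξ b * pathWeight μ ξ G c := by
  rw [pathWeight, pathWeight, hGlaw, hGlaw, List.length_append, pow_add, mul_assoc,
    ENNReal.ofReal_mul (pow_nonneg (sub_nonneg.2 hf1) _), incrementWeight, incrementWeight,
    incrementWeight, List.map_append, List.prod_append]
  ring

variable (hmeas : ∀ i, Measurable (ξ i)) (hindep : iIndepFun ξ μ)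
  (hident : ∀ i, Measure.map (ξ i) μ = Measure.map (ξ 0) μ) (hGmeas : Measurable G)
  (hGindep : IndepFun G (fun ω i => ξ i ω) μ)
include hmeas hindep hident hGmeas hGindep

lemma measure_increments_stopped_mem (s : Set (List ℤ)) :
    μ {ω | increments ξ (G ω) ω ∈ s} = ∑' l : s, pathWeight μ ξ G l := by
  change μ ((fun ω => increments ξ (G ω) ω) ⁻¹' s) = _
  rw [← tsum_measure_preimage_singleton s.to_countable fun l _ =>
    measurableSet_increments_stopped_eq hmeas hGmeas l]
  exact tsum_congr fun l => measure_increments_stopped_eq hmeas hindep hident hGindep l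

lemma measure_reverse_increments_stopped_mem (s : Set (List ℤ)) :
    μ {ω | (increments ξ (G ω) ω).reverse ∈ s} = μ {ω | increments ξ (G ω) ω ∈ s} := by
  have hrev : List.reverse ⁻¹' s = List.reverse '' s :=
    (congrFun (image_eq_preimage_of_inverse List.reverse_reverse List.reverse_reverse) s).symm
  calc μ {ω | (increments ξ (G ω) ω).reverse ∈ s}
      = ∑' l : List.reverse '' s, pathWeight μ ξ G l := by
        rw [← hrev]
        exact measure_increments_stopped_mem hmeas hindep hident hGmeas hGindep (List.reverse ⁻¹' s)
    _ = ∑' l : s, pathWeight μ ξ G l := by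
        rw [tsum_image _ List.reverse_injective.injOn]
        simp_rw [pathWeight_reverse]
    _ = μ {ω | increments ξ (G ω) ω ∈ s} :=
        (measure_increments_stopped_mem hmeas hindep hident hGmeas hGindep s).symm

lemma map_walkPos_sub_runMax_stopped :
    μ.map (fun ω => walkPos ξ (G ω) ω - runMax ξ (G ω) ω) = μ.map fun ω => runMin ξ (G ω) ω := by
  ext s hs
  rw [Measure.map_apply (measurable_walkPos_sub_runMax_stopped hmeas hGmeas) hs,
    Measure.map_apply (measurable_runMin_stopped hmeas hGmeas) hs]
  simp_rw [← sum_increments, ← maxPrefixSum_increments, ← minPrefixSum_increments,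
    List.sum_sub_maxPrefixSum]
  exact measure_reverse_increments_stopped_mem hmeas hindep hident hGmeas hGindep
    (List.minPrefixSum ⁻¹' s)

lemma measure_runMax_stopped_inter_walkPos_sub {f : ℝ}
    (hGlaw : ∀ t : ℕ, μ {ω | G ω = t} = ENNReal.ofReal ((1 - f) ^ t * f)) (hf1 : f ≤ 1)
    (x y : ℤ) :
    μ ((fun ω => runMax ξ (G ω) ω) ⁻¹' {x}
        ∩ (fun ω => walkPos ξ (G ω) ω - runMax ξ (G ω) ω) ⁻¹' {y})
      = (∑' b : List.strictRecordPaths x,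
          ENNReal.ofReal ((1 - f) ^ (b : List ℤ).length) * incrementWeight μ ξ b)
        * ∑' c : List.nonposPaths y, pathWeight μ ξ G c := by
  have hset : (fun ω => runMax ξ (G ω) ω) ⁻¹' {x}
        ∩ (fun ω => walkPos ξ (G ω) ω - runMax ξ (G ω) ω) ⁻¹' {y}
      = {ω | increments ξ (G ω) ω ∈ {l | l.maxPrefixSum = x ∧ l.sum - l.maxPrefixSum = y}} := by
    ext ω
    simp [maxPrefixSum_increments, sum_increments]
  rw [hset, ← List.image2_append_strictRecordPaths_nonposPaths,
    measure_increments_stopped_mem hmeas hindep hident hGmeas hGindep]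
  exact ENNReal.tsum_image2_eq_mul (List.injOn_append_strictRecordPaths x _) _ _ _
    fun b _ c _ => pathWeight_append hGlaw hf1 b c

lemma indepFun_runMax_stopped_walkPos_sub [IsProbabilityMeasure μ] {f : ℝ}
    (hGlaw : ∀ t : ℕ, μ {ω | G ω = t} = ENNReal.ofReal ((1 - f) ^ t * f)) (hf1 : f ≤ 1) :
    IndepFun (fun ω => runMax ξ (G ω) ω) (fun ω => walkPos ξ (G ω) ω - runMax ξ (G ω) ω) μ :=
  indepFun_of_measure_inter_preimage_singleton_eq_mul (measurable_runMax_stopped hmeas hGmeas)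
    (measurable_walkPos_sub_runMax_stopped hmeas hGmeas) _ _
    (measure_runMax_stopped_inter_walkPos_sub hmeas hindep hident hGmeas hGindep hGlaw hf1)

end RandomWalk

open RandomWalk

theorem wiener_hopf_geometric_general
    {Ω : Type*} [MeasurableSpace Ω] (μ : Measure Ω) [IsProbabilityMeasure μ]
    (f : ℝ) (hf1 : f < 1)
    (ξ : ℕ → Ω → ℤ)
    (hmeas : ∀ i, Measurable (ξ i))
    (hindep : iIndepFun ξ μ)
    (hident : ∀ i, Measure.map (ξ i) μ = Measure.map (ξ 0) μ)
    (G : Ω → ℕ) (hGmeas : Measurable G)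
    (hGlaw : ∀ t : ℕ, μ {ω | G ω = t} = ENNReal.ofReal ((1 - f) ^ t * f))
    (hGindep : IndepFun G (fun ω => fun i => ξ i ω) μ) :
    IndepFun (fun ω => runMax ξ (G ω) ω)
        (fun ω => walkPos ξ (G ω) ω - runMax ξ (G ω) ω) μ ∧
    Measure.map (fun ω => walkPos ξ (G ω) ω - runMax ξ (G ω) ω) μ
        = Measure.map (fun ω => runMin ξ (G ω) ω) μ ∧
    ∀ w : ℝ, 0 < w →
      ∫⁻ ω, ENNReal.ofReal (w ^ (walkPos ξ (G ω) ω)) ∂μ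
        = (∫⁻ ω, ENNReal.ofReal (w ^ (runMax ξ (G ω) ω)) ∂μ)
            * ∫⁻ ω, ENNReal.ofReal (w ^ (runMin ξ (G ω) ω)) ∂μ := by
  have hMax := measurable_runMax_stopped hmeas hGmeas
  have hDepth := measurable_walkPos_sub_runMax_stopped hmeas hGmeas
  have hindepMax := indepFun_runMax_stopped_walkPos_sub hmeas hindep hident hGmeas hGindep hGlaw
    hf1.le
  have hlaw := map_walkPos_sub_runMax_stopped hmeas hindep hident hGmeas hGindep
  have hDepthMin : IdentDistrib (fun ω => walkPos ξ (G ω) ω - runMax ξ (G ω) ω)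
      (fun ω => runMin ξ (G ω) ω) μ μ :=
    ⟨hDepth.aemeasurable, (measurable_runMin_stopped hmeas hGmeas).aemeasurable, hlaw⟩
  refine ⟨hindepMax, hlaw, fun w hw => ?_⟩
  calc ∫⁻ ω, ENNReal.ofReal (w ^ (walkPos ξ (G ω) ω)) ∂μ
      = ∫⁻ ω, ENNReal.ofReal (w ^ (runMax ξ (G ω) ω
          + (walkPos ξ (G ω) ω - runMax ξ (G ω) ω))) ∂μ := by simp only [add_sub_cancel]
    _ = (∫⁻ ω, ENNReal.ofReal (w ^ (runMax ξ (G ω) ω)) ∂μ)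
          * ∫⁻ ω, ENNReal.ofReal (w ^ (walkPos ξ (G ω) ω - runMax ξ (G ω) ω)) ∂μ :=
        lintegral_ofReal_zpow_add_of_indepFun hMax hDepth hindepMax hw
    _ = (∫⁻ ω, ENNReal.ofReal (w ^ (runMax ξ (G ω) ω)) ∂μ)
          * ∫⁻ ω, ENNReal.ofReal (w ^ (runMin ξ (G ω) ω)) ∂μ := by
        congr 1
        exact (hDepthMin.comp
          (measurable_of_countable fun z : ℤ => ENNReal.ofReal (w ^ z))).lintegral_eq

/-- Wiener–Hopf factorisation at an independent geometric time.
For a random walk with i.i.d. integer increments and an independent geometric time `G`: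
`Z̄_G` and `Z_G − Z̄_G` are independent, `Z_G − Z̄_G` is distributed as the running minimum
`min_{0≤n≤G} Z_n`, and consequently
`E[w^{Z_G}] = E[w^{Z̄_G}]·E[w^{min_{0≤n≤G} Z_n}]`. -/
theorem wiener_hopf_geometric
    {Ω : Type*} [MeasurableSpace Ω] (μ : Measure Ω) [IsProbabilityMeasure μ]
    (f : ℝ) (hf0 : 0 < f) (hf1 : f < 1)
    (ξ : ℕ → Ω → ℤ)
    (hmeas : ∀ i, Measurable (ξ i))
    (hindep : iIndepFun ξ μ)
    (hident : ∀ i, Measure.map (ξ i) μ = Measure.map (ξ 0) μ)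
    (G : Ω → ℕ) (hGmeas : Measurable G)
    (hGlaw : ∀ t : ℕ, μ {ω | G ω = t} = ENNReal.ofReal ((1 - f) ^ t * f))
    (hGindep : IndepFun G (fun ω => fun i => ξ i ω) μ) :
    IndepFun (fun ω => runMax ξ (G ω) ω)
        (fun ω => walkPos ξ (G ω) ω - runMax ξ (G ω) ω) μ ∧
    Measure.map (fun ω => walkPos ξ (G ω) ω - runMax ξ (G ω) ω) μ
        = Measure.map (fun ω => runMin ξ (G ω) ω) μ ∧
    ∀ w : ℝ, 0 < w →
      ∫⁻ ω, ENNReal.ofReal (w ^ (walkPos ξ (G ω) ω)) ∂μ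
        = (∫⁻ ω, ENNReal.ofReal (w ^ (runMax ξ (G ω) ω)) ∂μ)
            * ∫⁻ ω, ENNReal.ofReal (w ^ (runMin ξ (G ω) ω)) ∂μ :=
  wiener_hopf_geometric_general μ f hf1 ξ hmeas hindep hident G hGmeas hGlaw hGindep
end

section
/- Let c ∈ ℕ, θ ∈ (0,1), and z ∈ (0,1). Then the equation w^{c+1}·z·(1−θ) + z·θ = w has exactly one solution w in the interval (−1,1), and this solution lies in (0,1). -/
open Set

/-- No two distinct fixed points in (0,1): strict convexity argument. -/
lemma no_two_roots (c : ℕ) (hc : 0 < c) (θ : ℝ) (hθ0 : 0 < θ) (hθ1 : θ < 1)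
    (z : ℝ) (hz0 : 0 < z) (hz1 : z < 1)
    (a b : ℝ) (ha : a ∈ Ioo (0:ℝ) 1) (hb : b ∈ Ioo (0:ℝ) 1) (hab : a < b)
    (hfa : a ^ (c + 1) * z * (1 - θ) + z * θ = a)
    (hfb : b ^ (c + 1) * z * (1 - θ) + z * θ = b) : False := by
  obtain ⟨ha0, ha1⟩ := ha
  obtain ⟨hb0, hb1⟩ := hb
  have hpow := strictConvexOn_pow (n := c + 1) (by omega)
  have h1a : (0:ℝ) < 1 - a := by linarith
  set lam : ℝ := (1 - b) / (1 - a) with hlam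
  set mu : ℝ := (b - a) / (1 - a) with hmu
  have hlam0 : 0 < lam := div_pos (by linarith) h1a
  have hmu0 : 0 < mu := div_pos (by linarith) h1a
  have hsum : lam + mu = 1 := by
    rw [hlam, hmu, ← add_div]
    field_simp
    ring
  have hcomb : lam • a + mu • (1:ℝ) = b := by
    simp only [smul_eq_mul, hlam, hmu, mul_one]
    field_simp
    ring
  have hkey := hpow.2 (mem_Ici.2 ha0.le) (mem_Ici.2 (by norm_num : (0:ℝ) ≤ 1))
    (by linarith) hlam0 hmu0 hsum
  rw [hcomb] at hkey
  simp only [smul_eq_mul, one_pow, mul_one] at hkey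
  -- hkey : b ^ (c+1) < lam * a^(c+1) + mu
  have hz1θ : 0 < z * (1 - θ) := by nlinarith
  have hcomb' : lam * a + mu = b := by
    have := hcomb; simpa using this
  have hA : lam * (a ^ (c + 1) * z * (1 - θ)) = lam * (a - z * θ) := by
    have : a ^ (c + 1) * z * (1 - θ) = a - z * θ := by linarith
    rw [this]
  nlinarith [mul_lt_mul_of_pos_right hkey hz1θ, hA, hcomb',
    mul_pos hmu0 (sub_pos.2 hz1)]

/-- For `c ∈ ℕ`, `θ ∈ (0,1)` and `z ∈ (0,1)`, the equation
`w^{c+1}·z·(1−θ) + z·θ = w` has exactly one solution `w ∈ (−1,1)`, and it lies in `(0,1)`. -/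
theorem denominator_root_unique_pos
    (c : ℕ) (hc : 0 < c) (θ : ℝ) (hθ0 : 0 < θ) (hθ1 : θ < 1)
    (z : ℝ) (hz : z ∈ Ioo (0 : ℝ) 1) :
    ∃ w : ℝ, w ∈ Ioo (0 : ℝ) 1 ∧ w ^ (c + 1) * z * (1 - θ) + z * θ = w ∧
      ∀ w' ∈ Ioo (-1 : ℝ) 1, w' ^ (c + 1) * z * (1 - θ) + z * θ = w' → w' = w := by
  obtain ⟨hz0, hz1⟩ := hz
  set g : ℝ → ℝ := fun w => w ^ (c + 1) * z * (1 - θ) + z * θ - w with hg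
  have hcont : ContinuousOn g (Icc (0:ℝ) 1) := (by fun_prop : Continuous g).continuousOn
  have hg0 : g 0 = z * θ := by simp [hg]
  have hg1 : g 1 = z - 1 := by simp [hg]; ring
  have hmem : (0:ℝ) ∈ Ioo (g 1) (g 0) := by
    rw [hg0, hg1]; constructor <;> nlinarith
  obtain ⟨w, hw, hgw⟩ := intermediate_value_Ioo' (by norm_num : (0:ℝ) ≤ 1) hcont hmem
  have hweq : w ^ (c + 1) * z * (1 - θ) + z * θ = w := by
    have : g w = 0 := hgw
    simp only [hg] at this; linarith
  -- any root in (-1,1) is positive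
  have hposroot : ∀ w' ∈ Ioo (-1:ℝ) 1,
      w' ^ (c + 1) * z * (1 - θ) + z * θ = w' → 0 < w' := by
    rintro w' ⟨hw'1, hw'2⟩ heq
    by_contra hle
    push_neg at hle
    have habs : |w'| ≤ 1 := abs_le.2 ⟨hw'1.le, hw'2.le⟩
    have h1 : |w'| ^ (c + 1) ≤ |w'| := by
      calc |w'| ^ (c + 1) ≤ |w'| ^ 1 :=
        pow_le_pow_of_le_one (abs_nonneg _) habs (by omega)
      _ = |w'| := pow_one _
    have h2 : w' ≤ w' ^ (c + 1) := by
      have := neg_abs_le (w' ^ (c + 1))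
      rw [abs_pow] at this
      have habs' : |w'| = -w' := abs_of_nonpos hle
      nlinarith
    have hz1θ : z * (1 - θ) < 1 := by nlinarith
    nlinarith [mul_le_mul_of_nonneg_right h2 (by nlinarith : (0:ℝ) ≤ z * (1 - θ))]
  refine ⟨w, hw, hweq, fun w' hw' heq => ?_⟩
  have hw'pos : 0 < w' := hposroot w' hw' heq
  have hw'mem : w' ∈ Ioo (0:ℝ) 1 := ⟨hw'pos, hw'.2⟩
  rcases lt_trichotomy w' w with h | h | h
  · exact absurd (no_two_roots c hc θ hθ0 hθ1 z hz0 hz1 w' w hw'mem hw h heq hweq) not_false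
  · exact h
  · exact absurd (no_two_roots c hc θ hθ0 hθ1 z hz0 hz1 w w' hw hw'mem h hweq heq) not_false
end

section
/- Let c ∈ ℕ, θ ∈ (0,1), and z ∈ (−1,0). Then the equation w^{c+1}·z·(1−θ) + z·θ = w has exactly one solution w in (−1,1), and this solution lies in (−1,0). -/
open Set

private lemma aux_two_roots_false (c : ℕ) (A β : ℝ) (hAβ : A + β < 1) {u v : ℝ}
    (hu0 : 0 < u) (huv : u < v) (hv1 : v < 1)
    (hu : A * u ^ (c + 1) + β = u) (hv : A * v ^ (c + 1) + β = v) : False := by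
  have hv0 : 0 < v := hu0.trans huv
  set S : ℝ := ∑ i ∈ Finset.range (c + 1), v ^ i * u ^ (c - i) with hSdef
  have hgeom : S * (v - u) = v ^ (c + 1) - u ^ (c + 1) := by
    simpa using geom_sum₂_mul v u (c + 1)
  have hSpos : 0 < S := by
    apply Finset.sum_pos
    · intro i _
      exact mul_pos (pow_pos hv0 i) (pow_pos hu0 _)
    · exact ⟨0, Finset.mem_range.mpr (Nat.succ_pos c)⟩
  have hAS : A * S = 1 := by
    have hne : v - u ≠ 0 := sub_ne_zero.mpr (ne_of_gt huv)
    have h2 : (A * S) * (v - u) = 1 * (v - u) := by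
      linear_combination A * hgeom + hv - hu
    exact mul_right_cancel₀ hne h2
  rcases le_or_gt A 0 with hA | hA
  · nlinarith
  · -- A > 0 case
    set T : ℝ := ∑ i ∈ Finset.range (c + 1), v ^ i with hTdef
    have hgeomT : T * (v - 1) = v ^ (c + 1) - 1 := geom_sum_mul v (c + 1)
    have he : A * T * (1 - v) = A + β - v := by
      linear_combination (-A) * hgeomT - hv
    have hT : A * T < 1 := by
      have h3 : A * T * (1 - v) < 1 * (1 - v) := by
        rw [he]; linarith
      exact lt_of_mul_lt_mul_right h3 (by linarith)
    have hST : S ≤ T := by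
      apply Finset.sum_le_sum
      intro i _
      have h1 : u ^ (c - i) ≤ 1 := pow_le_one₀ hu0.le (le_of_lt (by linarith))
      have h2 : (0:ℝ) ≤ v ^ i := (pow_pos hv0 i).le
      nlinarith
    nlinarith [mul_le_mul_of_nonneg_left hST hA.le]

private lemma aux_exists_unique (c : ℕ) (A β : ℝ) (hβ : 0 < β) (hAβ : A + β < 1) :
    ∃ u ∈ Ioo (0:ℝ) 1, A * u ^ (c + 1) + β = u ∧
      ∀ v ∈ Ioo (0:ℝ) 1, A * v ^ (c + 1) + β = v → v = u := by
  set f : ℝ → ℝ := fun u => A * u ^ (c + 1) + β - u with hf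
  have hcont : Continuous f := by fun_prop
  have hf0 : f 0 = β := by simp [hf]
  have hf1 : f 1 = A + β - 1 := by simp [hf]
  have hmem : (0:ℝ) ∈ Ioo (f 1) (f 0) := by
    rw [hf0, hf1]; exact ⟨by linarith, hβ⟩
  obtain ⟨u, huI, hfu⟩ :=
    intermediate_value_Ioo' (by norm_num : (0:ℝ) ≤ 1) hcont.continuousOn hmem
  have hroot : A * u ^ (c + 1) + β = u := by
    have : A * u ^ (c + 1) + β - u = 0 := hfu
    linarith
  refine ⟨u, huI, hroot, ?_⟩
  intro v hvI hvroot
  rcases lt_trichotomy v u with h | h | h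
  · exact absurd (aux_two_roots_false c A β hAβ hvI.1 h huI.2 hvroot hroot) (by simp)
  · exact h
  · exact absurd (aux_two_roots_false c A β hAβ huI.1 h hvI.2 hroot hvroot) (by simp)

/-- For `c ∈ ℕ`, `θ ∈ (0,1)` and `z ∈ (−1,0)`, the equation
`w^{c+1}·z·(1−θ) + z·θ = w` has exactly one solution `w ∈ (−1,1)`, and it lies in `(−1,0)`. -/
theorem denominator_root_unique_neg
    (c : ℕ) (hc : 0 < c) (θ : ℝ) (hθ0 : 0 < θ) (hθ1 : θ < 1)
    (z : ℝ) (hz : z ∈ Ioo (-1 : ℝ) 0) :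
    ∃ w : ℝ, w ∈ Ioo (-1 : ℝ) 0 ∧ w ^ (c + 1) * z * (1 - θ) + z * θ = w ∧
      ∀ w' ∈ Ioo (-1 : ℝ) 1, w' ^ (c + 1) * z * (1 - θ) + z * θ = w' → w' = w := by
  obtain ⟨hz1, hz0⟩ := hz
  have hβ : (0:ℝ) < -(z * θ) := by nlinarith
  have ht2 : ((-1:ℝ) ^ c) ^ 2 = 1 := by
    rw [← pow_mul, mul_comm, pow_mul]; norm_num
  have hAle : (-1:ℝ) ^ c * (z * (1 - θ)) ≤ -(z * (1 - θ)) := by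
    rcases Nat.even_or_odd c with h | h
    · rw [h.neg_one_pow]; nlinarith
    · rw [h.neg_one_pow]; linarith
  have hAβ : (-1:ℝ) ^ c * (z * (1 - θ)) + -(z * θ) < 1 := by nlinarith
  obtain ⟨u, huI, hroot, huniq⟩ :=
    aux_exists_unique c ((-1:ℝ) ^ c * (z * (1 - θ))) (-(z * θ)) hβ hAβ
  obtain ⟨hu0, hu1⟩ := huI
  refine ⟨-u, ⟨by linarith, by linarith⟩, ?_, ?_⟩
  · rw [neg_pow]
    linear_combination -hroot
  · intro w' hw'I hw'eq
    obtain ⟨hw'1, hw'2⟩ := hw'I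
    have hw'neg : w' < 0 := by
      by_contra h
      push_neg at h
      have h1 : (0:ℝ) ≤ w' ^ (c + 1) := pow_nonneg h _
      have hz1θ : z * (1 - θ) < 0 := mul_neg_of_neg_of_pos hz0 (by linarith)
      have h2 : w' ^ (c + 1) * (z * (1 - θ)) ≤ 0 :=
        mul_nonpos_of_nonneg_of_nonpos h1 hz1θ.le
      nlinarith [h2]
    have huniq' : -w' = u := by
      apply huniq (-w') ⟨by linarith, by linarith⟩
      rw [neg_pow]
      linear_combination -hw'eq - (z * (1 - θ) * w' ^ (c + 1)) * ht2
    linarith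
end
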